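/- arXiv:1105.0635 — 7 statements merged into one kernel-verified Lean document; each statement's English description precedes it below -/
import Mathlib

section
/- There exist a constant C > 0 and a threshold p₀ > 0 such that for every real p ≥ p₀ and every natural number n with n ≤ p, the Poisson probability satisfies h_n(p) ≤ C · p^{-1/2} · exp(-(n - p)² / (2p)). -/
open Real

lemma key1 {t : ℝ} (h0 : 0 < t) (h1 : t ≤ 1) : (t ^ 2 - 1) / 2 ≤ t * Real.log t := by
  rcases eq_or_lt_of_le h1 with rfl | h1
  · simp
  · have hlt : 0 < -Real.log t := by
      have := Real.log_neg h0 h1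
      linarith
    have hs := (Real.self_lt_sinh_iff).mpr hlt
    rw [Real.sinh_eq, Real.exp_neg, neg_neg, Real.exp_log h0] at hs
    have h2 : t * t⁻¹ = 1 := mul_inv_cancel₀ h0.ne'
    nlinarith [mul_lt_mul_of_pos_left hs h0]

lemma key2 {t : ℝ} (h0 : 0 < t) : -(1 / Real.exp 1) ≤ t * Real.log t := by
  have h1 : Real.log t⁻¹ ≤ t⁻¹ / Real.exp 1 := by
    have h2 : Real.log (t⁻¹ / Real.exp 1) ≤ t⁻¹ / Real.exp 1 - 1 :=
      Real.log_le_sub_one_of_pos (by positivity)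
    rw [Real.log_div (by positivity) (Real.exp_ne_zero 1), Real.log_exp] at h2
    linarith
  have h3 : t * Real.log t⁻¹ ≤ t * (t⁻¹ / Real.exp 1) :=
    mul_le_mul_of_nonneg_left h1 h0.le
  rw [Real.log_inv, mul_neg] at h3
  have h4 : t * (t⁻¹ / Real.exp 1) = 1 / Real.exp 1 := by field_simp
  rw [h4] at h3
  linarith

lemma stirling_lower (n : ℕ) (hn : 1 ≤ n) :
    Real.sqrt n * ((n : ℝ) / Real.exp 1) ^ n ≤ (Nat.factorial n : ℝ) := by
  have hn0 : (0:ℝ) < n := by exact_mod_cast hn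
  have hpi : Real.sqrt π ≤ Stirling.stirlingSeq n := by
    obtain ⟨k, rfl⟩ := Nat.exists_eq_add_of_le hn
    have ht : Filter.Tendsto (Stirling.stirlingSeq ∘ Nat.succ) Filter.atTop (nhds (Real.sqrt π)) :=
      Stirling.tendsto_stirlingSeq_sqrt_pi.comp (Filter.tendsto_add_atTop_nat 1)
    have := Stirling.stirlingSeq'_antitone.le_of_tendsto ht k
    simpa [Nat.succ_eq_add_one, add_comm] using this
  have hden : 0 < Real.sqrt (2 * n : ℝ) * ((n : ℝ) / Real.exp 1) ^ n := by positivity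
  rw [Stirling.stirlingSeq, le_div_iff₀ hden] at hpi
  refine le_trans ?_ hpi
  rw [← mul_assoc]
  have hp : (0:ℝ) ≤ ((n : ℝ) / Real.exp 1) ^ n := by positivity
  refine mul_le_mul_of_nonneg_right ?_ hp
  rw [← Real.sqrt_mul pi_pos.le]
  apply Real.sqrt_le_sqrt
  nlinarith [pi_gt_three]

set_option maxHeartbeats 1000000 in
/-- For a real parameter `p > 0` and `n : ℕ`, `h_n(p) = e^{-p} p^n / n!` is the probability
that a Poisson random variable with mean `p` equals `n`.
There exist `C > 0` and `p₀ > 0` such that for all `p ≥ p₀` and all `n ≤ p`,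
`h_n(p) ≤ C · p^{-1/2} · exp(-(n - p)² / (2p))`. -/
theorem poisson_gaussian_bound :
    ∃ C > (0 : ℝ), ∃ p₀ > (0 : ℝ), ∀ p : ℝ, p₀ ≤ p → ∀ n : ℕ, (n : ℝ) ≤ p →
      Real.exp (-p) * p ^ n / (Nat.factorial n : ℝ) ≤
        C * (1 / Real.sqrt p) * Real.exp (-((n : ℝ) - p) ^ 2 / (2 * p)) := by
  refine ⟨2, by norm_num, 160000, by norm_num, fun p hp n hn => ?_⟩
  have hp0 : (0:ℝ) < p := by linarith
  have hp1 : (1:ℝ) ≤ p := by linarith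
  have hsp : 0 < Real.sqrt p := Real.sqrt_pos.2 hp0
  have hQ : -((n : ℝ) - p) ^ 2 / (2 * p) = -(((n:ℝ) - p) ^ 2 / (2 * p)) := by ring
  rw [hQ]
  rcases Nat.eq_zero_or_pos n with rfl | hn1
  · -- n = 0 case
    simp only [Nat.cast_zero, pow_zero, Nat.factorial_zero, Nat.cast_one, mul_one, div_one]
    have he : ((0:ℝ) - p) ^ 2 / (2 * p) = p / 2 := by
      field_simp
      ring
    rw [he]
    have h1 : Real.exp (-(p / 2)) ≤ 2 * (1 / Real.sqrt p) := by
      have hsq : Real.sqrt p ≤ p := by nlinarith [Real.sq_sqrt hp0.le, Real.sqrt_nonneg p]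
      have hex : p ≤ 2 * Real.exp (p / 2) := by nlinarith [Real.add_one_le_exp (p / 2)]
      have hone : Real.exp (-(p/2)) * Real.exp (p/2) = 1 := by
        rw [← Real.exp_add]; norm_num
      rw [mul_one_div, le_div_iff₀ hsp]
      nlinarith [Real.exp_pos (-(p/2)), Real.exp_pos (p/2),
        mul_le_mul_of_nonneg_left hsq (Real.exp_pos (-(p/2))).le,
        mul_le_mul_of_nonneg_left hex (Real.exp_pos (-(p/2))).le]
    calc Real.exp (-p) = Real.exp (-(p/2)) * Real.exp (-(p/2)) := by
          rw [← Real.exp_add]; ring_nf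
      _ ≤ (2 * (1 / Real.sqrt p)) * Real.exp (-(p/2)) :=
          mul_le_mul_of_nonneg_right h1 (Real.exp_nonneg _)
  · -- n ≥ 1 case
    set N : ℝ := (n : ℝ) with hNdef
    have hn1' : 1 ≤ n := hn1
    have hN1 : (1:ℝ) ≤ N := by rw [hNdef]; exact_mod_cast hn1'
    have hN0 : (0:ℝ) < N := by linarith
    have hsN : 0 < Real.sqrt N := Real.sqrt_pos.2 hN0
    have hfac := stirling_lower n hn1
    have hdpos : 0 < Real.sqrt N * (N / Real.exp 1) ^ n := by positivity
    -- Step 1: replace factorial by Stirling lower bound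
    have step1 : Real.exp (-p) * p ^ n / (Nat.factorial n : ℝ) ≤
        Real.exp (-p) * p ^ n / (Real.sqrt N * (N / Real.exp 1) ^ n) := by
      apply div_le_div_of_nonneg_left _ hdpos hfac
      positivity
    -- Step 2: rewrite as explicit exponential
    have e1 : p ^ n = Real.exp (N * Real.log p) := by
      rw [Real.exp_nat_mul, Real.exp_log hp0]
    have e2 : (N / Real.exp 1) ^ n = Real.exp (N * (Real.log N - 1)) := by
      rw [Real.exp_nat_mul, Real.exp_sub, Real.exp_log hN0]
    have step2 : Real.exp (-p) * p ^ n / (Real.sqrt N * (N / Real.exp 1) ^ n) =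
        (1 / Real.sqrt N) * Real.exp (-p + N * Real.log p - N * (Real.log N - 1)) := by
      rw [e1, e2, Real.exp_sub, Real.exp_add]
      field_simp
    -- Step 3: key exponent estimate
    have ht0 : 0 < N / p := by positivity
    have ht1 : N / p ≤ 1 := (div_le_one hp0).mpr hn
    have hkey := key1 ht0 ht1
    rw [Real.log_div hN0.ne' hp0.ne'] at hkey
    have h5 := mul_le_mul_of_nonneg_left hkey hp0.le
    have h6 : p * (N / p * (Real.log N - Real.log p)) = N * Real.log N - N * Real.log p := by
      field_simp
    have h7 : p * ((N / p) ^ 2 - 1) / 2 = (N ^ 2 - p ^ 2) / (2 * p) := by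
      field_simp
    have hmain : (N ^ 2 - p ^ 2) / (2 * p) ≤ N * Real.log N - N * Real.log p := by
      rw [mul_div_assoc] at h7
      linarith [h5, h6.symm.trans_le (le_of_eq rfl)]
    have h8 : (N - p) ^ 2 / (2 * p) = (N ^ 2 - p ^ 2) / (2 * p) - (N - p) := by
      field_simp
      ring
    have hEQ : -p + N * Real.log p - N * (Real.log N - 1) ≤ -((N - p) ^ 2 / (2 * p)) := by
      have : N * (Real.log N - 1) = N * Real.log N - N := by ring
      rw [this, h8]
      linarith
    rcases le_or_gt p (2 * N) with hcase | hcase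
    · -- N ≥ p/2 : use 1/√N ≤ 2/√p
      have hsqrt4 : Real.sqrt p ≤ 2 * Real.sqrt N := by
        have h4N : p ≤ 4 * N := by linarith
        have : Real.sqrt p ≤ Real.sqrt (4 * N) := Real.sqrt_le_sqrt h4N
        rwa [show (4:ℝ) * N = 2 ^ 2 * N by ring, Real.sqrt_mul (by positivity),
          Real.sqrt_sq (by norm_num)] at this
      have hs2 : 1 / Real.sqrt N ≤ 2 * (1 / Real.sqrt p) := by
        rw [mul_one_div, div_le_div_iff₀ hsN hsp]
        linarith
      calc Real.exp (-p) * p ^ n / (Nat.factorial n : ℝ)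
          ≤ (1 / Real.sqrt N) * Real.exp (-p + N * Real.log p - N * (Real.log N - 1)) := by
            rw [← step2]; exact step1
        _ ≤ (2 * (1 / Real.sqrt p)) * Real.exp (-((N - p) ^ 2 / (2 * p))) := by
            apply mul_le_mul hs2 (Real.exp_le_exp.2 hEQ) (Real.exp_nonneg _) (by positivity)
    · -- N < p/2 : extra slack of exp(-p/200)
      have hkey2 := key2 ht0
      rw [Real.log_div hN0.ne' hp0.ne'] at hkey2
      have h5' := mul_le_mul_of_nonneg_left hkey2 hp0.le
      have hinv : p * -(1 / Real.exp 1) ≥ -(37 / 100) * p := by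
        have he0 : (0:ℝ) < Real.exp 1 := Real.exp_pos 1
        have hE71 : (2.71:ℝ) ≤ Real.exp 1 := by
          have := Real.exp_one_gt_d9
          norm_num at this ⊢
          linarith
        rw [ge_iff_le, mul_neg, neg_mul, neg_le_neg_iff, mul_one_div, div_le_iff₀ he0]
        nlinarith [mul_le_mul_of_nonneg_left hE71 hp0.le]
      have hup : (N ^ 2 - p ^ 2) / (2 * p) ≤ -(3 / 8) * p := by
        rw [div_le_iff₀ (by positivity)]
        nlinarith
      have hEQ2 : -p + N * Real.log p - N * (Real.log N - 1) ≤
          -((N - p) ^ 2 / (2 * p)) - p / 200 := by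
        rw [h6] at h5'
        have hx : N * (Real.log N - 1) = N * Real.log N - N := by ring
        rw [hx, h8]
        linarith
      have hslack : Real.exp (-(p / 200)) ≤ 2 * (1 / Real.sqrt p) := by
        have ha := Real.add_one_le_exp (p / 400)
        have hb : Real.exp (p / 200) = Real.exp (p / 400) ^ 2 := by
          rw [sq, ← Real.exp_add]
          congr 1
          ring
        have hc : p ≤ Real.exp (p / 200) := by nlinarith [Real.exp_pos (p / 400)]
        have hsq : Real.sqrt p ≤ p := by nlinarith [Real.sq_sqrt hp0.le, Real.sqrt_nonneg p]
        have hone : Real.exp (-(p/200)) * Real.exp (p/200) = 1 := by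
          rw [← Real.exp_add]; norm_num
        rw [mul_one_div, le_div_iff₀ hsp]
        nlinarith [Real.exp_pos (-(p/200)),
          mul_le_mul_of_nonneg_left hsq (Real.exp_pos (-(p/200))).le,
          mul_le_mul_of_nonneg_left hc (Real.exp_pos (-(p/200))).le]
      have hsN1 : 1 / Real.sqrt N ≤ 1 := by
        rw [div_le_one hsN]
        nlinarith [Real.sq_sqrt hN0.le, Real.sqrt_nonneg N]
      calc Real.exp (-p) * p ^ n / (Nat.factorial n : ℝ)
          ≤ (1 / Real.sqrt N) * Real.exp (-p + N * Real.log p - N * (Real.log N - 1)) := by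
            rw [← step2]; exact step1
        _ ≤ 1 * Real.exp (-((N - p) ^ 2 / (2 * p)) - p / 200) :=
            mul_le_mul hsN1 (Real.exp_le_exp.2 hEQ2) (Real.exp_nonneg _) (by norm_num)
        _ = Real.exp (-(p / 200)) * Real.exp (-((N - p) ^ 2 / (2 * p))) := by
            rw [one_mul, ← Real.exp_add]; ring_nf
        _ ≤ (2 * (1 / Real.sqrt p)) * Real.exp (-((N - p) ^ 2 / (2 * p))) :=
            mul_le_mul_of_nonneg_right hslack (Real.exp_nonneg _)
end

section
/- For every θ with 0 ≤ θ < 1/2, the family of expectations E[exp(θ · ((H(p) - p)⁻)² / p)] is bounded for all sufficiently large p; that is, there exist M < ∞ and p₀ > 0 such that for all p ≥ p₀, E[exp(θ · (max(p - H(p), 0))² / p)] ≤ M. -/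
/-!
Linearize the square with a standard Gaussian `Z`: `exp (x² / 2) = E[exp (x Z)]`, so with
`s² = 2θ / p` we get `exp (θ x² / p) ≤ E[exp (s |Z| x)]` for `x ≥ 0`; exchange the Poisson sum
and the Gaussian expectation. For fixed `t ≥ 0`, `exp (t (p - n)⁺) ≤ 1 + exp (t (p - n))`, and
the Poisson moment generating function gives
`E[exp (t (p - H))] = exp (p (t + e⁻ᵗ - 1)) ≤ exp (p t² / 2)`. At `t = s |Z|` this is
`exp (θ Z²)`, whose Gaussian expectation `(1 - 2θ)^(-1/2)` is finite because `θ < 1/2`.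
Hence the bound `1 + (1 - 2θ)^(-1/2)` holds for every `p > 0`.
-/

open Real MeasureTheory ProbabilityTheory
open scoped ENNReal Nat

lemma exp_neg_le_one_sub_add_sq_div_two {t : ℝ} (ht : 0 ≤ t) :
    exp (-t) ≤ 1 - t + t ^ 2 / 2 := by
  have hcubic : 1 + t + t ^ 2 / 2 + t ^ 3 / 6 ≤ exp t := by
    simpa [Finset.sum_range_succ, Nat.factorial] using sum_le_exp_of_nonneg ht 4
  have hq : 0 ≤ 1 - t + t ^ 2 / 2 := by nlinarith [sq_nonneg (t - 1)]
  rw [exp_neg, inv_le_iff_one_le_mul₀ (exp_pos t)]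
  nlinarith [mul_le_mul_of_nonneg_right hcubic hq, mul_nonneg (pow_nonneg ht 3) hq,
    pow_nonneg ht 4]

lemma hasSum_poisson_mul_exp_mul_sub (p t : ℝ) :
    HasSum (fun n : ℕ => exp (-p) * p ^ n / n ! * exp (t * (p - n)))
      (exp (p * (t + exp (-t) - 1))) := by
  have h := (NormedSpace.expSeries_div_hasSum_exp (p * exp (-t))).mul_left
    (exp (-p) * exp (t * p))
  rw [← exp_eq_exp_ℝ, ← exp_add, ← exp_add] at h
  convert! h using 1
  · funext n
    rw [mul_pow, ← exp_nat_mul, exp_add, mul_sub, exp_sub, mul_neg, mul_comm (n : ℝ) t]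
    simp only [exp_neg]
    ring
  · ring_nf

lemma tsum_ofReal_eq_of_hasSum {α : Type*} {f : α → ℝ} {a : ℝ} (hf : HasSum f a)
    (h0 : ∀ n, 0 ≤ f n) :
    ∑' n, ENNReal.ofReal (f n) = ENNReal.ofReal a := by
  rw [← ENNReal.ofReal_tsum_of_nonneg h0 hf.summable, hf.tsum_eq]

lemma tsum_poisson_mul_exp_negPart_mul_le {p t : ℝ} (hp : 0 ≤ p) (ht : 0 ≤ t) :
    ∑' n : ℕ, ENNReal.ofReal (exp (-p) * p ^ n / n ! * exp (max (p - n) 0 * t))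
      ≤ 1 + ENNReal.ofReal (exp (p * t ^ 2 / 2)) := by
  have hpmf : ∀ n : ℕ, 0 ≤ exp (-p) * p ^ n / n ! := fun n => by positivity
  have hsplit : ∀ x : ℝ, exp (max x 0 * t) ≤ 1 + exp (t * x) := fun x => by
    rcases le_total x 0 with h | h
    · rw [max_eq_right h, zero_mul, exp_zero]; linarith [exp_pos (t * x)]
    · rw [max_eq_left h, mul_comm]; linarith
  calc ∑' n : ℕ, ENNReal.ofReal (exp (-p) * p ^ n / n ! * exp (max (p - n) 0 * t))
      ≤ ∑' n : ℕ, (ENNReal.ofReal (exp (-p) * p ^ n / n !)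
          + ENNReal.ofReal (exp (-p) * p ^ n / n ! * exp (t * (p - n)))) := by
        refine ENNReal.tsum_le_tsum fun n => ?_
        rw [← ENNReal.ofReal_add (hpmf n) (by positivity), ← mul_one_add]
        exact ENNReal.ofReal_le_ofReal (mul_le_mul_of_nonneg_left (hsplit _) (hpmf n))
    _ = 1 + ENNReal.ofReal (exp (p * (t + exp (-t) - 1))) := by
        rw [ENNReal.tsum_add,
          tsum_ofReal_eq_of_hasSum (by simpa using hasSum_poisson_mul_exp_mul_sub p 0) hpmf,
          tsum_ofReal_eq_of_hasSum (hasSum_poisson_mul_exp_mul_sub p t)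
            fun n => mul_nonneg (hpmf n) (exp_pos _).le, ENNReal.ofReal_one]
    _ ≤ 1 + ENNReal.ofReal (exp (p * t ^ 2 / 2)) := by
        gcongr
        nlinarith [exp_neg_le_one_sub_add_sq_div_two ht]

lemma ofReal_exp_sq_div_two_eq_lintegral_gaussianReal (t : ℝ) :
    ENNReal.ofReal (exp (t ^ 2 / 2))
      = ∫⁻ z, ENNReal.ofReal (exp (t * z)) ∂gaussianReal 0 1 := by
  rw [← ofReal_integral_eq_lintegral_ofReal (integrable_exp_mul_gaussianReal t)
    (ae_of_all _ fun _ => (exp_pos _).le)]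
  have h := congrFun (mgf_id_gaussianReal (μ := 0) (v := 1)) t
  simp only [mgf, id, zero_mul, NNReal.coe_one, one_mul, zero_add] at h
  rw [h]

lemma ofReal_mul_exp_sq_div_two_le_lintegral_gaussianReal {c x : ℝ} (hc : 0 ≤ c)
    (hx : 0 ≤ x) :
    ENNReal.ofReal (c * exp (x ^ 2 / 2))
      ≤ ∫⁻ z, ENNReal.ofReal (c * exp (x * |z|)) ∂gaussianReal 0 1 := by
  rw [ENNReal.ofReal_mul hc, ofReal_exp_sq_div_two_eq_lintegral_gaussianReal,
    ← lintegral_const_mul' _ _ ENNReal.ofReal_ne_top]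
  refine lintegral_mono fun z => ?_
  rw [← ENNReal.ofReal_mul hc]
  exact ENNReal.ofReal_le_ofReal (mul_le_mul_of_nonneg_left
    (exp_le_exp.2 (mul_le_mul_of_nonneg_left (le_abs_self z) hx)) hc)

lemma lintegral_exp_mul_sq_gaussianReal {a : ℝ} (ha : a < 1 / 2) :
    ∫⁻ z, ENNReal.ofReal (exp (a * z ^ 2)) ∂gaussianReal 0 1
      = ENNReal.ofReal (√(1 - 2 * a))⁻¹ := by
  have hb : 0 < 1 / 2 - a := by linarith
  have hdensity : ∀ z, gaussianPDFReal 0 1 z * exp (a * z ^ 2)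
      = (√(2 * π))⁻¹ * exp (-(1 / 2 - a) * z ^ 2) := fun z => by
    rw [gaussianPDFReal, mul_assoc, ← exp_add]
    simp only [NNReal.coe_one, mul_one, sub_zero]
    ring_nf
  rw [gaussianReal_of_var_ne_zero _ one_ne_zero,
    lintegral_withDensity_eq_lintegral_mul _ (measurable_gaussianPDF _ _) (by fun_prop)]
  simp only [Pi.mul_apply, gaussianPDF, ← ENNReal.ofReal_mul (gaussianPDFReal_nonneg _ _ _),
    hdensity]
  rw [← ofReal_integral_eq_lintegral_ofReal ((integrable_exp_neg_mul_sq hb).const_mul _)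
    (ae_of_all _ fun _ => by positivity), integral_const_mul, integral_gaussian]
  have h2π : 0 < √(2 * π) := by positivity
  rw [show π / (1 / 2 - a) = 2 * π / (1 - 2 * a) by field_simp,
    sqrt_div (by positivity), ← div_eq_inv_mul, div_div_cancel_left' h2π.ne']

/-- For `H(p)` a Poisson random variable with mean `p` (so `P(H(p) = n) = e^{-p} p^n / n!`),
and `0 ≤ θ < 1/2`, the expectations `E[exp(θ ((H(p) - p)⁻)² / p)]` are bounded for all
sufficiently large `p`: there exist `M < ∞` and `p₀ > 0` with
`E[exp(θ (max(p - H(p), 0))² / p)] ≤ M` for all `p ≥ p₀`. -/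
theorem poisson_negative_part_sq_exp_moment_bounded (θ : ℝ) (hθ0 : 0 ≤ θ) (hθ : θ < 1 / 2) :
    ∃ M : ℝ, ∃ p₀ > (0 : ℝ), ∀ p : ℝ, p₀ ≤ p →
      (∑' n : ℕ, ENNReal.ofReal (Real.exp (-p) * p ^ n / (Nat.factorial n : ℝ) *
        Real.exp (θ * (max (p - (n : ℝ)) 0) ^ 2 / p))) ≤ ENNReal.ofReal M := by
  refine ⟨1 + (√(1 - 2 * θ))⁻¹, 1, one_pos, fun p hp => ?_⟩
  have hp0 : 0 < p := one_pos.trans_le hp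
  set s := √(2 * θ / p)
  have hs : 0 ≤ s := sqrt_nonneg _
  have hs2 : s ^ 2 = 2 * θ / p := sq_sqrt (by positivity)
  calc ∑' n : ℕ, ENNReal.ofReal (exp (-p) * p ^ n / n ! * exp (θ * (max (p - n) 0) ^ 2 / p))
      = ∑' n : ℕ,
          ENNReal.ofReal (exp (-p) * p ^ n / n ! * exp ((max (p - n) 0 * s) ^ 2 / 2)) := by
        congr! 5 with n
        rw [mul_pow, hs2]
        ring
    _ ≤ ∑' n : ℕ, ∫⁻ z,
          ENNReal.ofReal (exp (-p) * p ^ n / n ! * exp (max (p - n) 0 * s * |z|))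
          ∂gaussianReal 0 1 :=
        ENNReal.tsum_le_tsum fun n => ofReal_mul_exp_sq_div_two_le_lintegral_gaussianReal
          (by positivity) (mul_nonneg (le_max_right _ _) hs)
    _ = ∫⁻ z, ∑' n : ℕ,
          ENNReal.ofReal (exp (-p) * p ^ n / n ! * exp (max (p - n) 0 * s * |z|))
          ∂gaussianReal 0 1 := (lintegral_tsum fun n => by fun_prop).symm
    _ ≤ ∫⁻ z, 1 + ENNReal.ofReal (exp (θ * z ^ 2)) ∂gaussianReal 0 1 := by
        refine lintegral_mono fun z => ?_
        have hpoisson :=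
          tsum_poisson_mul_exp_negPart_mul_le hp0.le (mul_nonneg hs (abs_nonneg z))
        rw [mul_pow, hs2, sq_abs,
          show p * (2 * θ / p * z ^ 2) / 2 = θ * z ^ 2 by field_simp] at hpoisson
        simpa only [mul_assoc] using hpoisson
    _ = ENNReal.ofReal (1 + (√(1 - 2 * θ))⁻¹) := by
        rw [lintegral_add_left measurable_const, lintegral_exp_mul_sq_gaussianReal hθ,
          ENNReal.ofReal_add zero_le_one (by positivity)]
        simp
end

section
/- With m = ⌊p⌋, the Poisson probability at the floor of the mean satisfies lim_{p→∞} h_m(p) · √(2πp) = 1; in particular there exist C₁ > 0 and p₀ > 0 such that h_{⌊p⌋}(p) ≤ C₁ / √p for all p ≥ p₀. -/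
/-! Write `m = ⌊p⌋₊`. Dividing out Stirling's formula `m! ~ √(2πm) (m/e)^m` writes
`h_m(p) √(2πp)` as the product of `√π / stirlingSeq m → 1`, `√(p/m) → 1` and
`e^{m-p} (p/m)^m = exp (m - p + m log (p/m))`. Since `0 ≤ p - m < 1`, the bounds
`1 - 1/x ≤ log x ≤ x - 1` squeeze this exponent between `-1/p` and `0`. The bound `C₁ / √p`
follows from the limit with `C₁ = 2`, as `√p ≤ √(2πp)`. -/

open Filter Topology Real
open scoped Nat

lemma neg_sq_div_le_sub_add_mul_log {m p : ℝ} (hm : 0 < m) (hp : 0 < p) :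
    -((p - m) ^ 2 / p) ≤ m - p + m * log (p / m) := by
  have hlog : 1 - m / p ≤ log (p / m) := by
    simpa only [inv_div] using one_sub_inv_le_log_of_pos (div_pos hp hm)
  have hsq : -((p - m) ^ 2 / p) = m - p + m * (1 - m / p) := by
    field_simp
    ring
  rw [hsq]
  gcongr

lemma sub_add_mul_log_nonpos {m p : ℝ} (hm : 0 < m) (hp : 0 < p) :
    m - p + m * log (p / m) ≤ 0 := by
  have hlog := mul_le_mul_of_nonneg_left (log_le_sub_one_of_pos (div_pos hp hm)) hm.le
  have hcancel : m * (p / m - 1) = p - m := by field_simp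
  linarith

lemma tendsto_natFloor_sub_add_mul_log :
    Tendsto (fun p : ℝ => (⌊p⌋₊ - p) + ⌊p⌋₊ * log (p / ⌊p⌋₊)) atTop (𝓝 0) := by
  have hlower : Tendsto (fun p : ℝ => -p⁻¹) atTop (𝓝 0) := by
    simpa using (tendsto_inv_atTop_zero (𝕜 := ℝ)).neg
  refine tendsto_of_tendsto_of_tendsto_of_le_of_le' hlower tendsto_const_nhds ?_ ?_
  all_goals
    filter_upwards [eventually_ge_atTop 1] with p hp
    have hm : (0 : ℝ) < ⌊p⌋₊ := by exact_mod_cast Nat.floor_pos.mpr hp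
    have hp0 : 0 < p := by linarith
  · have hfloor : (p - ⌊p⌋₊) ^ 2 ≤ 1 := by
      have := Nat.floor_le hp0.le
      have := Nat.lt_floor_add_one p
      nlinarith
    calc -p⁻¹ = -(1 / p) := by rw [one_div]
      _ ≤ -((p - ⌊p⌋₊) ^ 2 / p) := by gcongr
      _ ≤ _ := neg_sq_div_le_sub_add_mul_log hm hp0
  · exact sub_add_mul_log_nonpos hm hp0

lemma tendsto_div_natFloor : Tendsto (fun p : ℝ => p / ⌊p⌋₊) atTop (𝓝 1) := by
  simpa only [inv_div, inv_one] using (tendsto_nat_floor_div_atTop (R := ℝ)).inv₀ one_ne_zero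

lemma tendsto_sqrt_pi_div_stirlingSeq :
    Tendsto (fun n : ℕ => √π / Stirling.stirlingSeq n) atTop (𝓝 1) := by
  have hπ : √π ≠ 0 := by positivity
  simpa only [div_self hπ, Pi.div_def] using
    (tendsto_const_nhds (x := √π)).div Stirling.tendsto_stirlingSeq_sqrt_pi hπ

lemma exp_neg_mul_pow_div_factorial_mul_sqrt_eq {m : ℕ} (hm : m ≠ 0) {p : ℝ} (hp : 0 < p) :
    exp (-p) * p ^ m / m ! * √(2 * π * p) =
      √π / Stirling.stirlingSeq m * √(p / m) * exp (m - p + m * log (p / m)) := by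
  have hsqrt : √π * √(2 * m) * √(p / m) = √(2 * π * p) := by
    rw [← sqrt_mul (by positivity), ← sqrt_mul (by positivity)]
    congr 1
    field_simp
  rw [exp_add, ← Real.log_pow, exp_log (by positivity), exp_sub, ← exp_one_pow,
    Stirling.stirlingSeq, ← hsqrt, exp_neg, div_pow, div_pow]
  field_simp

theorem tendsto_poisson_floor_mul_sqrt :
    Tendsto (fun p : ℝ =>
        (exp (-p) * p ^ ⌊p⌋₊ / (⌊p⌋₊ ! : ℝ)) * √(2 * π * p)) atTop (𝓝 1) := by
  have hlim := ((tendsto_sqrt_pi_div_stirlingSeq.comp tendsto_nat_floor_atTop).mul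
    tendsto_div_natFloor.sqrt).mul
      ((continuous_exp.tendsto 0).comp tendsto_natFloor_sub_add_mul_log)
  rw [sqrt_one, exp_zero, mul_one, mul_one] at hlim
  refine hlim.congr' ?_
  filter_upwards [eventually_ge_atTop 1] with p hp
  exact (exp_neg_mul_pow_div_factorial_mul_sqrt_eq (Nat.floor_pos.mpr hp).ne' (by linarith)).symm

/-- With `m = ⌊p⌋`, the Poisson probability `h_m(p) = e^{-p} p^m / m!` satisfies
`lim_{p→∞} h_m(p) · √(2πp) = 1`; in particular there exist `C₁ > 0` and `p₀ > 0` such that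
`h_{⌊p⌋}(p) ≤ C₁ / √p` for all `p ≥ p₀`. -/
theorem poisson_at_floor_mean_asymptotics :
    Tendsto (fun p : ℝ =>
        (Real.exp (-p) * p ^ (⌊p⌋₊) / (Nat.factorial ⌊p⌋₊ : ℝ)) * Real.sqrt (2 * Real.pi * p))
      atTop (nhds 1) ∧
    ∃ C₁ > (0 : ℝ), ∃ p₀ > (0 : ℝ), ∀ p : ℝ, p₀ ≤ p →
      Real.exp (-p) * p ^ (⌊p⌋₊) / (Nat.factorial ⌊p⌋₊ : ℝ) ≤ C₁ / Real.sqrt p := by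
  refine ⟨tendsto_poisson_floor_mul_sqrt, 2, two_pos, ?_⟩
  obtain ⟨a, ha⟩ := eventually_atTop.mp
    (tendsto_poisson_floor_mul_sqrt.eventually_le_const one_lt_two)
  refine ⟨max a 1, by positivity, fun p hp => ?_⟩
  have hp1 : 1 ≤ p := le_of_max_le_right hp
  rw [le_div_iff₀ (by positivity)]
  calc _ ≤ exp (-p) * p ^ ⌊p⌋₊ / (⌊p⌋₊ ! : ℝ) * √(2 * π * p) := by
        gcongr
        nlinarith [pi_gt_three]
    _ ≤ 2 := ha p (le_of_max_le_left hp)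
end

section
/- For every real p ≥ 1, with m = ⌊p⌋, and every natural number n ≤ m, the ratio of Poisson probabilities satisfies h_n(p) / h_m(p) ≤ e · exp(-(p - n)² / (2p)); equivalently, log(h_n(p) / h_m(p)) ≤ -(p - n)² / (2p) + 1. -/
/-!
The ratio telescopes to `∏_{n < k ≤ m} k / p`. Bounding each factor by `exp (k / p - 1)` and
summing the arithmetic progression gives the exponent `(m (m + 1) - n (n + 1)) / (2p) - (m - n)`,
which falls short of `1 - (p - n)² / (2p)` by `((p - m) (1 - (p - m)) + p + n) / (2p) ≥ 0`,
as `m ≤ p < m + 1`.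
-/

open Finset Nat Real

theorem Nat.factorial_mul_prod_Ioc {n m : ℕ} (h : n ≤ m) : n ! * ∏ k ∈ Ioc n m, k = m ! := by
  induction m, h using Nat.le_induction with
  | base => simp
  | succ m hnm ih => rw [prod_Ioc_succ_top hnm, ← mul_assoc, ih, factorial_succ, mul_comm]

theorem Nat.sum_Ioc_id_mul_two_add {n m : ℕ} (h : n ≤ m) :
    (∑ k ∈ Ioc n m, k) * 2 + n * (n + 1) = m * (m + 1) := by
  induction m, h using Nat.le_induction with
  | base => simp
  | succ m hnm ih => rw [sum_Ioc_succ_top hnm]; linarith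

theorem exp_neg_mul_pow_div_factorial_div_eq_prod {p : ℝ} (hp : p ≠ 0) {n m : ℕ} (h : n ≤ m) :
    (exp (-p) * p ^ n / n !) / (exp (-p) * p ^ m / m !) = ∏ k ∈ Ioc n m, ((k : ℝ) / p) := by
  obtain ⟨d, rfl⟩ := Nat.exists_eq_add_of_le h
  rw [prod_div_distrib, prod_const, card_Ioc, Nat.add_sub_cancel_left, ← Nat.cast_prod,
    ← factorial_mul_prod_Ioc h, pow_add]
  push_cast
  field_simp

theorem prod_le_exp_sum_sub_one {ι : Type*} (s : Finset ι) {f : ι → ℝ} (hf : ∀ i ∈ s, 0 ≤ f i) :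
    ∏ i ∈ s, f i ≤ exp (∑ i ∈ s, (f i - 1)) := by
  rw [exp_sum]
  exact prod_le_prod hf fun i _ ↦ by linarith [add_one_le_exp (f i - 1)]

theorem sum_Ioc_div_sub_one_le {p : ℝ} (hp : 0 < p) {n m : ℕ} (hnm : n ≤ m) (hmp : m ≤ p)
    (hpm : p ≤ m + 1) : ∑ k ∈ Ioc n m, ((k : ℝ) / p - 1) ≤ 1 - (p - n) ^ 2 / (2 * p) := by
  have hsum : (∑ k ∈ Ioc n m, (k : ℝ)) * 2 + n * (n + 1) = m * (m + 1) := by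
    simpa using congrArg ((↑) : ℕ → ℝ) (Nat.sum_Ioc_id_mul_two_add hnm)
  rw [sum_sub_distrib, ← sum_div, sum_const, card_Ioc, nsmul_one, Nat.cast_sub hnm,
    ← sub_nonneg]
  have hgap : 1 - (p - n) ^ 2 / (2 * p) - ((∑ k ∈ Ioc n m, (k : ℝ)) / p - (m - n)) =
      ((p - m) * (1 - (p - m)) + p + n) / (2 * p) := by
    field_simp
    linear_combination -hsum
  rw [hgap]
  have hfrac : 0 ≤ (p - m) * (1 - (p - m)) := mul_nonneg (by linarith) (by linarith)
  positivity

/-- For `p ≥ 1`, `m = ⌊p⌋`, and `n ≤ m`, the ratio of Poisson probabilities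
`h_n(p) / h_m(p)` (where `h_n(p) = e^{-p} p^n / n!`) satisfies
`h_n(p) / h_m(p) ≤ e · exp(-(p - n)² / (2p))`. -/
theorem poisson_ratio_bound (p : ℝ) (hp : 1 ≤ p) (n : ℕ) (hn : n ≤ ⌊p⌋₊) :
    (Real.exp (-p) * p ^ n / (Nat.factorial n : ℝ)) /
        (Real.exp (-p) * p ^ (⌊p⌋₊) / (Nat.factorial ⌊p⌋₊ : ℝ)) ≤
      Real.exp 1 * Real.exp (-(p - (n : ℝ)) ^ 2 / (2 * p)) := by
  have hp0 : 0 < p := by linarith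
  rw [exp_neg_mul_pow_div_factorial_div_eq_prod hp0.ne' hn]
  calc ∏ k ∈ Ioc n ⌊p⌋₊, ((k : ℝ) / p)
      ≤ exp (∑ k ∈ Ioc n ⌊p⌋₊, ((k : ℝ) / p - 1)) :=
        prod_le_exp_sum_sub_one _ fun _ _ ↦ by positivity
    _ ≤ exp (1 - (p - n) ^ 2 / (2 * p)) :=
        exp_le_exp.2 <| sum_Ioc_div_sub_one_le hp0 hn (Nat.floor_le hp0.le)
          (Nat.lt_floor_add_one p).le
    _ = exp 1 * exp (-(p - n) ^ 2 / (2 * p)) := by rw [← exp_add]; ring_nf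
end

section
/- For every θ with 0 ≤ θ < 1/2 and every real p > 1, the sum over natural numbers n with n < p - 1 satisfies Σ_{n ∈ ℕ, n < p-1} p^{-1/2} · exp((θ - 1/2)(n - p)² / p) ≤ ∫_{-∞}^{0} exp(-(1/2 - θ) ξ²) dξ. -/
/-! With `N = ⌈p - 1⌉₊` (so `n < p - 1 ↔ n < N`, and `N < p`) and `h = √p`, the sum is
`∑_{n < N} g (n/h - h) / h` for the Gaussian `g ξ = exp (-(1/2 - θ) ξ²)`: a left Riemann sum of
step `1/h` over `[-h, N/h - h] ⊆ (-∞, 0]`. As `g` increases on `(-∞, 0]`, each term is at most the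
integral of `g` over the step to its right, and `g ≥ 0` lets the integral grow to `(-∞, 0]`. -/

open Real Set MeasureTheory

theorem tsum_subtype_natCast_lt_eq_sum_range {M R : Type*} [AddCommMonoid M] [TopologicalSpace M]
    [Semiring R] [LinearOrder R] [FloorSemiring R] (a : R) (f : ℕ → M) :
    ∑' n : {n : ℕ // (n : R) < a}, f n = ∑ n ∈ Finset.range ⌈a⌉₊, f n := by
  rw [← Finset.tsum_subtype]
  exact (Equiv.subtypeEquivRight fun n => Nat.lt_ceil.symm.trans Finset.mem_range.symm).tsum_eq
    fun n : Finset.range ⌈a⌉₊ => f n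

theorem monotoneOn_exp_neg_mul_sq_Iic {b : ℝ} (hb : 0 ≤ b) :
    MonotoneOn (fun ξ : ℝ => exp (-b * ξ ^ 2)) (Iic 0) := by
  intro x hx y hy hxy
  rw [Set.mem_Iic] at hx hy
  have hsq : y ^ 2 ≤ x ^ 2 := by nlinarith
  exact exp_le_exp.mpr (by linarith [mul_le_mul_of_nonneg_left hsq hb])

theorem MonotoneOn.sum_range_div_le_setIntegral_Iic {f : ℝ → ℝ} {c h d : ℝ} {N : ℕ}
    (hf : MonotoneOn f (Iic c)) (hf0 : ∀ x ≤ c, 0 ≤ f x) (hint : IntegrableOn f (Iic c))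
    (hh : 0 < h) (hN : N / h - d ≤ c) :
    ∑ n ∈ Finset.range N, f (n / h - d) / h ≤ ∫ x in Iic c, f x := by
  have hmono : MonotoneOn (fun y : ℝ => f (y / h - d)) (Icc 0 N) := by
    have hle : ∀ y ∈ Icc (0 : ℝ) N, y / h - d ≤ c := fun y hy =>
      le_trans (by gcongr; exact hy.2) hN
    exact fun x hx y hy hxy => hf (hle x hx) (hle y hy) (by gcongr)
  have hsub : Ioc (-d) (N / h - d) ⊆ Iic c := fun x hx => hx.2.trans hN
  calc ∑ n ∈ Finset.range N, f (n / h - d) / h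
      = h⁻¹ * ∑ n ∈ Finset.Ico 0 N, f ((n : ℝ) / h - d) := by
        rw [← Finset.range_eq_Ico, Finset.mul_sum]; congr! 1 with n; ring
    _ ≤ h⁻¹ * ∫ y in (0 : ℝ)..N, f (y / h - d) := by
        gcongr
        exact_mod_cast MonotoneOn.sum_le_integral_Ico (f := fun y => f (y / h - d))
          (Nat.zero_le N) (by simpa using hmono)
    _ = ∫ x in -d..N / h - d, f x := by simp
    _ = ∫ x in Ioc (-d) (N / h - d), f x := by
        rw [intervalIntegral.integral_of_le (by
          have : (0 : ℝ) ≤ N / h := by positivity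
          linarith)]
    _ ≤ ∫ x in Iic c, f x := setIntegral_mono_set hint
        (ae_restrict_of_forall_mem measurableSet_Iic hf0) (ae_of_all _ hsub)

theorem sum_le_gaussian_integral_general (θ : ℝ) (hθ : θ < 1 / 2)
    (p : ℝ) (hp : 1 < p) :
    (∑' n : {n : ℕ // (n : ℝ) < p - 1},
        (1 / Real.sqrt p) * Real.exp ((θ - 1 / 2) * ((n : ℝ) - p) ^ 2 / p)) ≤
      ∫ ξ in Set.Iic (0 : ℝ), Real.exp (-(1 / 2 - θ) * ξ ^ 2) := by
  have hsqrt : 0 < √p := sqrt_pos.mpr (by linarith)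
  have hterm (n : ℕ) : (1 / √p) * exp ((θ - 1 / 2) * ((n : ℝ) - p) ^ 2 / p) =
      exp (-(1 / 2 - θ) * (n / √p - √p) ^ 2) / √p := by
    have : (n / √p - √p) ^ 2 = ((n : ℝ) - p) ^ 2 / p := by
      field_simp; rw [sq_sqrt (by linarith), mul_comm]
    rw [this]; ring_nf
  have hN : (⌈p - 1⌉₊ : ℝ) < p := by linarith [Nat.ceil_lt_add_one (by linarith : 0 ≤ p - 1)]
  rw [tsum_subtype_natCast_lt_eq_sum_range (p - 1)
    fun n => (1 / √p) * exp ((θ - 1 / 2) * ((n : ℝ) - p) ^ 2 / p)]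
  simp only [hterm]
  refine (monotoneOn_exp_neg_mul_sq_Iic (by linarith)).sum_range_div_le_setIntegral_Iic
    (fun _ _ => (exp_pos _).le) (integrable_exp_neg_mul_sq (by linarith)).integrableOn hsqrt ?_
  rw [sub_nonpos, div_le_iff₀ hsqrt, mul_self_sqrt (by linarith)]
  exact hN.le

/-- For `0 ≤ θ < 1/2` and `p > 1`, the sum over natural numbers `n < p - 1` of
`p^{-1/2} exp((θ - 1/2)(n - p)²/p)` is at most `∫_{-∞}^{0} exp(-(1/2 - θ) ξ²) dξ`. -/
theorem sum_le_gaussian_integral (θ : ℝ) (hθ0 : 0 ≤ θ) (hθ : θ < 1 / 2)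
    (p : ℝ) (hp : 1 < p) :
    (∑' n : {n : ℕ // (n : ℝ) < p - 1},
        (1 / Real.sqrt p) * Real.exp ((θ - 1 / 2) * ((n : ℝ) - p) ^ 2 / p)) ≤
      ∫ ξ in Set.Iic (0 : ℝ), Real.exp (-(1 / 2 - θ) * ξ ^ 2) :=
  sum_le_gaussian_integral_general θ hθ p hp
end

section
/- Fix ρ > 0 and θ ≥ 0. If G_r is a Poisson random variable with mean ρr, then limsup_{r→∞} E[exp(θ · max(ρr - G_r, 0)/√r)] ≤ exp(ρθ²/2) + 1. -/
open Filter

lemma exp_tsum_real (x : ℝ) : (∑' n : ℕ, x ^ n / (Nat.factorial n : ℝ)) = Real.exp x := by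
  rw [Real.exp_eq_exp_ℝ, NormedSpace.exp_eq_tsum_div]

lemma exp_neg_quad (s : ℝ) (hs : 0 ≤ s) : Real.exp (-s) ≤ 1 - s + s ^ 2 / 2 := by
  rcases le_or_gt s 1 with h1 | h1
  · have hb := Real.exp_bound (x := -s) (by rw [abs_neg, abs_of_nonneg hs]; exact h1)
      (n := 4) (by norm_num)
    rw [abs_le] at hb
    have := hb.2
    simp [Finset.sum_range_succ, Nat.factorial] at this
    rw [abs_of_nonneg hs] at this
    nlinarith [pow_le_pow_of_le_one hs h1 (by norm_num : 3 ≤ 4)]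
  · have h2 : Real.exp (-s) ≤ Real.exp (-1) := Real.exp_le_exp.mpr (by linarith)
    have h3 : Real.exp (-1) ≤ 1/2 := by
      rw [Real.exp_neg]
      have : (2:ℝ) ≤ Real.exp 1 := by
        have := Real.add_one_le_exp (1:ℝ); linarith
      rw [inv_le_comm₀ (Real.exp_pos 1) (by norm_num)] at *
      · linarith
    nlinarith

/-- Fix `ρ > 0` and `θ ≥ 0`. If `G_r` is Poisson with mean `ρr`, then
`limsup_{r→∞} E[exp(θ max(ρr - G_r, 0)/√r)] ≤ exp(ρθ²/2) + 1`. -/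
theorem poisson_negative_part_exp_moment_limsup (ρ θ : ℝ) (hρ : 0 < ρ) (hθ : 0 ≤ θ) :
    limsup (fun r : ℝ =>
        ∑' n : ℕ, ENNReal.ofReal (Real.exp (-(ρ * r)) * (ρ * r) ^ n / (Nat.factorial n : ℝ) *
          Real.exp (θ * max (ρ * r - (n : ℝ)) 0 / Real.sqrt r)))
      atTop ≤ ENNReal.ofReal (Real.exp (ρ * θ ^ 2 / 2) + 1) := by
  refine limsup_le_of_le (by isBoundedDefault) ?_
  filter_upwards [eventually_ge_atTop (1 : ℝ)] with r hr
  have hr0 : (0:ℝ) < r := lt_of_lt_of_le one_pos hr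
  have hsr : 0 < Real.sqrt r := Real.sqrt_pos.mpr hr0
  have hrr : Real.sqrt r * Real.sqrt r = r := Real.mul_self_sqrt hr0.le
  set c : ℝ := ρ * r with hc
  have hc0 : 0 ≤ c := by positivity
  set s : ℝ := θ / Real.sqrt r with hs
  have hs0 : 0 ≤ s := by positivity
  have hcs : c * s = θ * ρ * Real.sqrt r := by
    rw [hs, hc,
      show ρ * r * (θ / Real.sqrt r) = θ * ρ * (r / Real.sqrt r) from by ring,
      Real.div_sqrt]
  have hcs2 : c * s ^ 2 = ρ * θ ^ 2 := by
    rw [hs, hc,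
      show ρ * r * (θ / Real.sqrt r) ^ 2 = ρ * θ ^ 2 * (r / (Real.sqrt r * Real.sqrt r))
        from by ring,
      hrr, div_self hr0.ne', mul_one]
  -- pointwise bound
  have pt : ∀ n : ℕ,
      ENNReal.ofReal (Real.exp (-c) * c ^ n / (Nat.factorial n : ℝ) *
        Real.exp (θ * max (c - (n : ℝ)) 0 / Real.sqrt r))
      ≤ ENNReal.ofReal (Real.exp (θ * ρ * Real.sqrt r - c) *
            ((c * Real.exp (-s)) ^ n / (Nat.factorial n : ℝ)))
        + ENNReal.ofReal (Real.exp (-c) * (c ^ n / (Nat.factorial n : ℝ))) := by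
    intro n
    rw [← ENNReal.ofReal_add (by positivity) (by positivity)]
    apply ENNReal.ofReal_le_ofReal
    have key : Real.exp (θ * max (c - (n : ℝ)) 0 / Real.sqrt r)
        ≤ Real.exp (θ * (c - (n : ℝ)) / Real.sqrt r) + 1 := by
      rcases le_total 0 (c - (n : ℝ)) with h | h
      · rw [max_eq_left h]; linarith
      · rw [max_eq_right h]
        simp only [mul_zero, zero_div, Real.exp_zero]
        linarith [Real.exp_pos (θ * (c - (n : ℝ)) / Real.sqrt r)]
    have eqn : Real.exp (-c) * c ^ n / (Nat.factorial n : ℝ) *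
          Real.exp (θ * (c - (n : ℝ)) / Real.sqrt r)
        = Real.exp (θ * ρ * Real.sqrt r - c) *
            ((c * Real.exp (-s)) ^ n / (Nat.factorial n : ℝ)) := by
      have hexp : Real.exp (-s) ^ n = Real.exp (-((n : ℝ) * s)) := by
        rw [← Real.exp_nat_mul]; ring_nf
      have harg : -c + θ * (c - (n : ℝ)) / Real.sqrt r
          = θ * ρ * Real.sqrt r - c + -((n : ℝ) * s) := by
        rw [hs, hc,
          show -(ρ * r) + θ * (ρ * r - (n : ℝ)) / Real.sqrt r
              = θ * ρ * (r / Real.sqrt r) - ρ * r + -((n : ℝ) * (θ / Real.sqrt r))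
            from by ring,
          Real.div_sqrt]
      have h2 := congrArg Real.exp harg
      rw [Real.exp_add, Real.exp_add] at h2
      conv_rhs => rw [mul_pow, hexp]
      linear_combination (c ^ n / (Nat.factorial n : ℝ)) * h2
    calc Real.exp (-c) * c ^ n / (Nat.factorial n : ℝ) *
          Real.exp (θ * max (c - (n : ℝ)) 0 / Real.sqrt r)
        ≤ Real.exp (-c) * c ^ n / (Nat.factorial n : ℝ) *
          (Real.exp (θ * (c - (n : ℝ)) / Real.sqrt r) + 1) := by
          apply mul_le_mul_of_nonneg_left key (by positivity)
      _ = Real.exp (-c) * c ^ n / (Nat.factorial n : ℝ) *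
            Real.exp (θ * (c - (n : ℝ)) / Real.sqrt r)
          + Real.exp (-c) * (c ^ n / (Nat.factorial n : ℝ)) := by ring
      _ = _ := by rw [eqn]
  calc (∑' n : ℕ, ENNReal.ofReal (Real.exp (-c) * c ^ n / (Nat.factorial n : ℝ) *
          Real.exp (θ * max (c - (n : ℝ)) 0 / Real.sqrt r)))
      ≤ ∑' n : ℕ, (ENNReal.ofReal (Real.exp (θ * ρ * Real.sqrt r - c) *
            ((c * Real.exp (-s)) ^ n / (Nat.factorial n : ℝ)))
        + ENNReal.ofReal (Real.exp (-c) * (c ^ n / (Nat.factorial n : ℝ)))) :=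
        ENNReal.tsum_le_tsum pt
    _ = (∑' n : ℕ, ENNReal.ofReal (Real.exp (θ * ρ * Real.sqrt r - c) *
            ((c * Real.exp (-s)) ^ n / (Nat.factorial n : ℝ))))
        + ∑' n : ℕ, ENNReal.ofReal (Real.exp (-c) * (c ^ n / (Nat.factorial n : ℝ))) :=
        ENNReal.tsum_add
    _ ≤ ENNReal.ofReal (Real.exp (ρ * θ ^ 2 / 2)) + ENNReal.ofReal 1 := by
        gcongr
        · rw [← ENNReal.ofReal_tsum_of_nonneg (fun n => by positivity)
            (((Real.summable_pow_div_factorial _).mul_left _))]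
          apply ENNReal.ofReal_le_ofReal
          rw [tsum_mul_left, exp_tsum_real, ← Real.exp_add]
          apply Real.exp_le_exp.mpr
          nlinarith [exp_neg_quad s hs0, hc0, hcs, hcs2]
        · rw [← ENNReal.ofReal_tsum_of_nonneg (fun n => by positivity)
            (((Real.summable_pow_div_factorial _).mul_left _))]
          apply ENNReal.ofReal_le_ofReal
          rw [tsum_mul_left, exp_tsum_real, ← Real.exp_add, neg_add_cancel, Real.exp_zero]
    _ = ENNReal.ofReal (Real.exp (ρ * θ ^ 2 / 2) + 1) := by
        rw [← ENNReal.ofReal_add (Real.exp_pos _).le zero_le_one]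
end

section
/- For every θ > 0 and all real numbers x, y, the inequality exp(θ y²) ≤ exp(θ x²) · (1 + 2θ x (y - x) + (θ + 2θ² (|x| + |y - x|)²)(y - x)² · exp(2θ |y - x| (|x| + |y|))) holds. -/
/-- On `(-∞,0]`, `exp u ≤ 1 + u + u²/2`. -/
lemma exp_le_quadratic_of_nonpos {u : ℝ} (hu : u ≤ 0) :
    Real.exp u ≤ 1 + u + u ^ 2 / 2 := by
  have key : AntitoneOn (fun s : ℝ => 1 + s + s ^ 2 / 2 - Real.exp s) (Set.Iic 0) := by
    apply antitoneOn_of_hasDerivWithinAt_nonpos (f' := fun s => 1 + s - Real.exp s)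
      (convex_Iic 0)
    · fun_prop
    · intro s _
      have h : HasDerivAt (fun s : ℝ => 1 + s + s ^ 2 / 2 - Real.exp s)
          (1 + s - Real.exp s) s := by
        have h1 : HasDerivAt (fun s : ℝ => 1 + s + s ^ 2 / 2 - Real.exp s)
            ((0 + 1 + 2 * s ^ 1 / 2) - Real.exp s) s := by
          exact (((hasDerivAt_const s (1:ℝ)).add (hasDerivAt_id s)).add
            ((hasDerivAt_pow 2 s).div_const 2)).sub (Real.hasDerivAt_exp s)
        convert h1 using 1; ring
      exact h.hasDerivWithinAt
    · intro s _
      have := Real.add_one_le_exp s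
      linarith
  have h0 : (fun s : ℝ => 1 + s + s ^ 2 / 2 - Real.exp s) 0 ≤
      (fun s : ℝ => 1 + s + s ^ 2 / 2 - Real.exp s) u :=
    key (Set.mem_Iic.2 hu) (Set.mem_Iic.2 le_rfl) hu
  simp [Real.exp_zero] at h0
  linarith

/-- On `(-∞,0]`, `1 + v + v²/2 + v³/6 ≤ exp v`. -/
lemma cubic_le_exp_of_nonpos {v : ℝ} (hv : v ≤ 0) :
    1 + v + v ^ 2 / 2 + v ^ 3 / 6 ≤ Real.exp v := by
  have key : AntitoneOn (fun s : ℝ => Real.exp s - (1 + s + s ^ 2 / 2 + s ^ 3 / 6))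
      (Set.Iic 0) := by
    apply antitoneOn_of_hasDerivWithinAt_nonpos
      (f' := fun s => Real.exp s - (1 + s + s ^ 2 / 2)) (convex_Iic 0)
    · fun_prop
    · intro s _
      have h1 : HasDerivAt (fun s : ℝ => Real.exp s - (1 + s + s ^ 2 / 2 + s ^ 3 / 6))
          (Real.exp s - (0 + 1 + 2 * s ^ 1 / 2 + 3 * s ^ 2 / 6)) s := by
        exact (Real.hasDerivAt_exp s).sub ((((hasDerivAt_const s (1:ℝ)).add
          (hasDerivAt_id s)).add ((hasDerivAt_pow 2 s).div_const 2)).add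
          ((hasDerivAt_pow 3 s).div_const 6))
      have : HasDerivAt (fun s : ℝ => Real.exp s - (1 + s + s ^ 2 / 2 + s ^ 3 / 6))
          (Real.exp s - (1 + s + s ^ 2 / 2)) s := by
        convert h1 using 1; ring
      exact this.hasDerivWithinAt
    · intro s hs
      have := exp_le_quadratic_of_nonpos (le_of_lt (by simpa using hs))
      linarith
  have h0 : (fun s : ℝ => Real.exp s - (1 + s + s ^ 2 / 2 + s ^ 3 / 6)) 0 ≤
      (fun s : ℝ => Real.exp s - (1 + s + s ^ 2 / 2 + s ^ 3 / 6)) v :=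
    key (Set.mem_Iic.2 hv) (Set.mem_Iic.2 le_rfl) hv
  simp [Real.exp_zero] at h0
  linarith

/-- Key bound: `exp u ≤ 1 + u + (u²/2) exp |u|` for all real `u`. -/
lemma exp_le_one_add_add_sq_half_mul_exp_abs (u : ℝ) :
    Real.exp u ≤ 1 + u + u ^ 2 / 2 * Real.exp |u| := by
  rcases le_or_gt u 0 with hu | hu
  · have h1 := exp_le_quadratic_of_nonpos hu
    have h2 : (1 : ℝ) ≤ Real.exp |u| := Real.one_le_exp (abs_nonneg u)
    nlinarith [sq_nonneg u]
  · rw [abs_of_pos hu]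
    rcases le_or_gt u 2 with hu2 | hu2
    · -- use cubic lower bound at -u
      have hc : 1 + (-u) + (-u) ^ 2 / 2 + (-u) ^ 3 / 6 ≤ Real.exp (-u) :=
        cubic_le_exp_of_nonpos (by linarith)
      have hmul : Real.exp (-u) * Real.exp u = 1 := by
        rw [← Real.exp_add]; simp
      have hpos := Real.exp_pos u
      -- exp(-u)(1+u) ≥ (1 - u + u²/2 - u³/6)(1+u) ≥ 1 - u²/2
      have h1 : (1 + (-u) + (-u) ^ 2 / 2 + (-u) ^ 3 / 6) * (1 + u) ≤
          Real.exp (-u) * (1 + u) := by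
        apply mul_le_mul_of_nonneg_right hc (by linarith)
      have h2 : 1 - u ^ 2 / 2 ≤ (1 + (-u) + (-u) ^ 2 / 2 + (-u) ^ 3 / 6) * (1 + u) := by
        nlinarith [pow_nonneg hu.le 3]
      have h3 : 1 - u ^ 2 / 2 ≤ Real.exp (-u) * (1 + u) := le_trans h2 h1
      -- multiply by exp u
      nlinarith
    · have hpos := Real.exp_pos u
      have h2 : (2 : ℝ) ≤ u ^ 2 / 2 := by nlinarith
      nlinarith

/-- For every `θ > 0` and all reals `x, y`:
`exp(θy²) ≤ exp(θx²) (1 + 2θx(y-x) + (θ + 2θ²(|x| + |y-x|)²)(y-x)² exp(2θ|y-x|(|x| + |y|)))`. -/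
theorem exp_sq_taylor_bound (θ : ℝ) (hθ : 0 < θ) (x y : ℝ) :
    Real.exp (θ * y ^ 2) ≤ Real.exp (θ * x ^ 2) *
      (1 + 2 * θ * x * (y - x) +
        (θ + 2 * θ ^ 2 * (|x| + |y - x|) ^ 2) * (y - x) ^ 2 *
          Real.exp (2 * θ * |y - x| * (|x| + |y|))) := by
  set h := y - x with hh
  set u := θ * h * (x + y) with hu
  set E := 2 * θ * |h| * (|x| + |y|) with hE
  clear_value h u E
  have hsplit : θ * y ^ 2 = θ * x ^ 2 + u := by rw [hu, hh]; ring
  have hxpos := Real.exp_pos (θ * x ^ 2)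
  have hEexp1 : (1 : ℝ) ≤ Real.exp E := by
    apply Real.one_le_exp
    rw [hE]; positivity
  -- |u| ≤ E
  have habs : |u| ≤ E := by
    rw [hu, hE]
    have h1 : |θ * h * (x + y)| = θ * |h| * |x + y| := by
      rw [abs_mul, abs_mul, abs_of_pos hθ]
    rw [h1]
    have h2 : |x + y| ≤ |x| + |y| := abs_add_le x y
    have h3 : θ * |h| * |x + y| ≤ θ * |h| * (|x| + |y|) := by
      apply mul_le_mul_of_nonneg_left h2 (by positivity)
    have h4 : 0 ≤ θ * |h| * (|x| + |y|) := by positivity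
    linarith
  have hexpabs : Real.exp |u| ≤ Real.exp E := Real.exp_le_exp.2 habs
  -- u² / 2 ≤ 2 θ² (|x| + |h|)² h²
  have husq : u ^ 2 / 2 ≤ 2 * θ ^ 2 * (|x| + |h|) ^ 2 * h ^ 2 := by
    rw [hu]
    have h4 : |x + y| ≤ 2 * |x| + |h| := by
      have : x + y = 2 * x + h := by rw [hh]; ring
      rw [this]
      calc |2 * x + h| ≤ |2 * x| + |h| := abs_add_le _ _
        _ = 2 * |x| + |h| := by rw [abs_mul]; norm_num
    have h5 : (x + y) ^ 2 ≤ (2 * |x| + |h|) ^ 2 := by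
      have := sq_abs (x + y)
      nlinarith [abs_nonneg (x + y), abs_nonneg x, abs_nonneg h]
    have h6 : (2 * |x| + |h|) ^ 2 ≤ 4 * (|x| + |h|) ^ 2 := by
      nlinarith [mul_nonneg (abs_nonneg x) (abs_nonneg h)]
    have h7 : (x + y) ^ 2 ≤ 4 * (|x| + |h|) ^ 2 := h5.trans h6
    have h8 : θ ^ 2 * h ^ 2 * (x + y) ^ 2 ≤ θ ^ 2 * h ^ 2 * (4 * (|x| + |h|) ^ 2) :=
      mul_le_mul_of_nonneg_left h7 (by positivity)
    nlinarith [h8]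
  -- key bound
  have hkey := exp_le_one_add_add_sq_half_mul_exp_abs u
  have hsq2 : u ^ 2 / 2 * Real.exp |u| ≤ 2 * θ ^ 2 * (|x| + |h|) ^ 2 * h ^ 2 * Real.exp E := by
    apply mul_le_mul husq hexpabs (Real.exp_pos _).le (by positivity)
  -- u = 2θxh + θh²
  have huval : u = 2 * θ * x * h + θ * h ^ 2 := by rw [hu, hh]; ring
  have hθh2 : θ * h ^ 2 ≤ θ * h ^ 2 * Real.exp E := by
    nlinarith [mul_nonneg hθ.le (sq_nonneg h)]
  have hfinal : Real.exp u ≤ 1 + 2 * θ * x * h +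
      (θ + 2 * θ ^ 2 * (|x| + |h|) ^ 2) * h ^ 2 * Real.exp E := by
    calc Real.exp u ≤ 1 + u + u ^ 2 / 2 * Real.exp |u| := hkey
      _ ≤ 1 + (2 * θ * x * h + θ * h ^ 2) +
          2 * θ ^ 2 * (|x| + |h|) ^ 2 * h ^ 2 * Real.exp E := by
          rw [← huval]; linarith
      _ ≤ 1 + 2 * θ * x * h +
          (θ + 2 * θ ^ 2 * (|x| + |h|) ^ 2) * h ^ 2 * Real.exp E := by
          nlinarith [hθh2]
  calc Real.exp (θ * y ^ 2) = Real.exp (θ * x ^ 2) * Real.exp u := by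
        rw [← Real.exp_add, ← hsplit]
    _ ≤ Real.exp (θ * x ^ 2) * (1 + 2 * θ * x * h +
        (θ + 2 * θ ^ 2 * (|x| + |h|) ^ 2) * h ^ 2 * Real.exp E) := by
        apply mul_le_mul_of_nonneg_left hfinal hxpos.le
end
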